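/- Erdős–Rado sunflower lemma: any collection of more than n!(k-1)^n distinct sets, each of cardinality n, contains k sets forming a sunflower: there is a set Y such that any two of the k sets intersect exactly in Y. -/
import Mathlib

private lemma sunflower_aux {α : Type*} [DecidableEq α] (k : ℕ) (hk : 1 ≤ k) :
    ∀ n : ℕ, ∀ S : Finset (Finset α), (∀ A ∈ S, A.card = n) →
    n.factorial * (k - 1) ^ n < S.card →
    ∃ T ⊆ S, T.card = k ∧ ∃ Y : Finset α,
      ∀ A ∈ T, ∀ B ∈ T, A ≠ B → A ∩ B = Y := by
  intro n
  induction n with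
  | zero =>
    intro S hcard hS
    simp only [Nat.factorial_zero, pow_zero, mul_one] at hS
    exfalso
    have hsub : S ⊆ {∅} := by
      intro A hA
      simp [Finset.card_eq_zero.mp (hcard A hA)]
    have := Finset.card_le_card hsub
    simp at this
    omega
  | succ n ih =>
    intro S hcard hS
    -- pick a maximal pairwise-disjoint subfamily D
    classical
    set cand : Finset (Finset (Finset α)) :=
      S.powerset.filter (fun D => ∀ A ∈ D, ∀ B ∈ D, A ≠ B → A ∩ B = ∅) with hcand
    have hne : cand.Nonempty := ⟨∅, by simp [hcand]⟩
    obtain ⟨D, hDmem, hDmax⟩ := cand.exists_max_image Finset.card hne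
    simp only [hcand, Finset.mem_filter, Finset.mem_powerset] at hDmem
    obtain ⟨hDsub, hDdisj⟩ := hDmem
    by_cases hk' : k ≤ D.card
    · -- D itself contains a sunflower with empty core
      obtain ⟨T, hTD, hTcard⟩ := Finset.exists_subset_card_eq hk'
      exact ⟨T, hTD.trans hDsub, hTcard, ∅,
        fun A hA B hB hAB => hDdisj A (hTD hA) B (hTD hB) hAB⟩
    · push_neg at hk'
      have hDk : D.card ≤ k - 1 := by omega
      -- every member of S meets the union of D
      set U : Finset α := D.biUnion id with hU
      have hmeet : ∀ A ∈ S, ∃ x ∈ U, x ∈ A := by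
        intro A hA
        by_contra hcon
        push_neg at hcon
        have hdisj : ∀ C ∈ D, A ∩ C = ∅ := by
          intro C hC
          rw [Finset.eq_empty_iff_forall_notMem]
          intro y hy
          rw [Finset.mem_inter] at hy
          exact hcon y (Finset.mem_biUnion.mpr ⟨C, hC, hy.2⟩) hy.1
        have hAD : A ∉ D := by
          intro hAD
          have := hdisj A hAD
          rw [Finset.inter_self] at this
          have : A.card = 0 := by rw [this]; simp
          rw [hcard A hA] at this
          omega
        have hins : insert A D ∈ cand := by
          simp only [hcand, Finset.mem_filter, Finset.mem_powerset]
          constructor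
          · exact Finset.insert_subset hA hDsub
          · intro X hX Z hZ hXZ
            rcases Finset.mem_insert.mp hX with hXA | hXD
            · rcases Finset.mem_insert.mp hZ with hZA | hZD
              · exact absurd (hXA.trans hZA.symm) hXZ
              · rw [hXA]; exact hdisj Z hZD
            · rcases Finset.mem_insert.mp hZ with hZA | hZD
              · rw [hZA, Finset.inter_comm]; exact hdisj X hXD
              · exact hDdisj X hXD Z hZD hXZ
        have := hDmax _ hins
        rw [Finset.card_insert_of_notMem hAD] at this
        omega
      -- |U| ≤ (k-1)*(n+1)
      have hUcard : U.card ≤ (k - 1) * (n + 1) := by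
        calc U.card ≤ ∑ C ∈ D, (id C).card := Finset.card_biUnion_le
          _ = ∑ C ∈ D, (n + 1) := by
              apply Finset.sum_congr rfl
              intro C hC
              exact hcard C (hDsub hC)
          _ = D.card * (n + 1) := by rw [Finset.sum_const, smul_eq_mul]
          _ ≤ (k - 1) * (n + 1) := Nat.mul_le_mul_right _ hDk
      -- pigeonhole: some x in U lies in many sets of S
      have hcover : S ⊆ U.biUnion (fun x => S.filter (fun A => x ∈ A)) := by
        intro A hA
        obtain ⟨x, hxU, hxA⟩ := hmeet A hA
        exact Finset.mem_biUnion.mpr ⟨x, hxU, Finset.mem_filter.mpr ⟨hA, hxA⟩⟩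
      obtain ⟨x, hxU, hx⟩ :
          ∃ x ∈ U, n.factorial * (k - 1) ^ n < (S.filter (fun A => x ∈ A)).card := by
        by_contra hcon
        push_neg at hcon
        have h1 : S.card ≤ ∑ x ∈ U, (S.filter (fun A => x ∈ A)).card :=
          le_trans (Finset.card_le_card hcover) Finset.card_biUnion_le
        have h2 : ∑ x ∈ U, (S.filter (fun A => x ∈ A)).card
            ≤ U.card * (n.factorial * (k - 1) ^ n) := by
          calc ∑ x ∈ U, (S.filter (fun A => x ∈ A)).card
              ≤ ∑ _x ∈ U, n.factorial * (k - 1) ^ n :=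
                Finset.sum_le_sum (fun x hx => hcon x hx)
            _ = U.card * (n.factorial * (k - 1) ^ n) := by
                rw [Finset.sum_const, smul_eq_mul]
        have h3 : U.card * (n.factorial * (k - 1) ^ n)
            ≤ (n + 1).factorial * (k - 1) ^ (n + 1) := by
          calc U.card * (n.factorial * (k - 1) ^ n)
              ≤ (k - 1) * (n + 1) * (n.factorial * (k - 1) ^ n) :=
                Nat.mul_le_mul_right _ hUcard
            _ = (n + 1).factorial * (k - 1) ^ (n + 1) := by
                rw [Nat.factorial_succ, pow_succ]; ring
        omega
      -- apply IH to the link of x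
      set Sx := S.filter (fun A => x ∈ A) with hSx
      set S' := Sx.image (fun A => A.erase x) with hS'
      have hinj : Set.InjOn (fun A : Finset α => A.erase x) ↑Sx := by
        intro A hA B hB hAB
        simp only [hSx, Finset.coe_filter, Set.mem_setOf_eq] at hA hB
        have hAB' : A.erase x = B.erase x := hAB
        have : insert x (A.erase x) = insert x (B.erase x) := by rw [hAB']
        rwa [Finset.insert_erase hA.2, Finset.insert_erase hB.2] at this
      have hS'card : S'.card = Sx.card := Finset.card_image_of_injOn hinj
      have hS'sets : ∀ B ∈ S', B.card = n := by
        intro B hB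
        obtain ⟨A, hA, rfl⟩ := Finset.mem_image.mp hB
        simp only [hSx, Finset.mem_filter] at hA
        rw [Finset.card_erase_of_mem hA.2, hcard A hA.1]
        omega
      have hS'big : n.factorial * (k - 1) ^ n < S'.card := by rw [hS'card]; exact hx
      obtain ⟨T', hT'sub, hT'card, Y, hY⟩ := ih S' hS'sets hS'big
      have hxnot : ∀ B ∈ T', x ∉ B := by
        intro B hB
        obtain ⟨A, _, rfl⟩ := Finset.mem_image.mp (hT'sub hB)
        exact Finset.notMem_erase x A
      refine ⟨T'.image (insert x ·), ?_, ?_, insert x Y, ?_⟩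
      · intro A hA
        obtain ⟨B, hB, rfl⟩ := Finset.mem_image.mp hA
        obtain ⟨C, hC, rfl⟩ := Finset.mem_image.mp (hT'sub hB)
        simp only [hSx, Finset.mem_filter] at hC
        rw [Finset.insert_erase hC.2]
        exact hC.1
      · rw [Finset.card_image_of_injOn, hT'card]
        intro a ha b hb hab
        have hab' : insert x a = insert x b := hab
        have : (insert x a).erase x = (insert x b).erase x := by rw [hab']
        rwa [Finset.erase_insert (hxnot a ha), Finset.erase_insert (hxnot b hb)] at this
      · intro A hA B hB hAB
        obtain ⟨a, ha, rfl⟩ := Finset.mem_image.mp hA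
        obtain ⟨b, hb, rfl⟩ := Finset.mem_image.mp hB
        have hab : a ≠ b := fun h => hAB (by rw [h])
        rw [← Finset.insert_inter_distrib, hY a ha b hb hab]

theorem erdos_rado_sunflower {α : Type*} [DecidableEq α] (n k : ℕ) (S : Finset (Finset α))
    (hcard : ∀ A ∈ S, A.card = n)
    (hS : n.factorial * (k - 1) ^ n < S.card) :
    ∃ T ⊆ S, T.card = k ∧ ∃ Y : Finset α,
      ∀ A ∈ T, ∀ B ∈ T, A ≠ B → A ∩ B = Y := by
  rcases Nat.eq_zero_or_pos k with rfl | hk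
  · exact ⟨∅, Finset.empty_subset S, rfl, ∅, by simp⟩
  · exact sunflower_aux k hk n S hcard hS
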